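/- arXiv:2111.02024 — 2 statements merged into one kernel-verified Lean document; each statement's English description precedes it below -/
import Mathlib

section
/- Fix a state s, a length k, and the ADMDP transition graph G, and let n = |S||A|k. For each closed walk c of length k starting at s, define x(c) ∈ ℝ^n by x(c)_{(s',a,i)} = 1 if the i-th step of c leaves state s' with action a, and 0 otherwise. Then the convex hull of {x(c) : c ∈ C_{(s,k)}} is exactly the polytope of points x ∈ ℝ^n satisfying: x ≥ 0; Σ_{a∈A} x_{(s,a,1)} = 1; x_{(s',a,1)} = 0 for all s' ≠ s and all a; x_{(s',a',k)} = 0 for all (s',a') ∉ I(s); and for every state s'' and every 2 ≤ i ≤ k, Σ_{(s',a')∈I(s'')} x_{(s',a',i-1)} = Σ_{a∈A} x_{(s'',a,i)}. -/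
/-- The state reached after `t` steps when starting at `s` and taking the actions
`w 0, w 1, …` in the ADMDP with deterministic transition function `N`. -/
def stSeq {S A : Type*} (N : S → A → S) (s : S) (w : ℕ → A) : ℕ → S
  | 0 => s
  | t + 1 => N (stSeq N s w t) (w t)

/-- The vector `x(c) ∈ ℝ^{S × A × k}` associated to the walk from `s` determined by the
action sequence `w`: `x(c)_{(s',a,i)} = 1` iff the `i`-th step of the walk leaves state
`s'` with action `a`. -/
def walkVec {S A : Type*} [DecidableEq S] [DecidableEq A] (N : S → A → S) (s : S) (k : ℕ)
    (w : ℕ → A) : S × A × Fin k → ℝ :=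
  fun p => if stSeq N s w p.2.2 = p.1 ∧ w p.2.2 = p.2.1 then 1 else 0

set_option linter.unusedSectionVars false

namespace WalkPoly

variable {S A : Type*} [Fintype S] [Fintype A] [DecidableEq S] [DecidableEq A]

def Feas (N : S → A → S) (s : S) (k : ℕ) (hk : 0 < k) (x : S × A × Fin k → ℝ) : Prop :=
  (∀ p, 0 ≤ x p) ∧
  (∑ a : A, x (s, a, ⟨0, hk⟩) = 1) ∧
  (∀ (s' : S) (a : A), s' ≠ s → x (s', a, ⟨0, hk⟩) = 0) ∧
  (∀ (s' : S) (a' : A), N s' a' ≠ s → x (s', a', ⟨k - 1, Nat.sub_lt hk Nat.one_pos⟩) = 0) ∧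
  (∀ (s'' : S) (j : ℕ) (hj : j + 1 < k),
    (∑ p ∈ Finset.univ.filter (fun p : S × A => N p.1 p.2 = s''),
        x (p.1, p.2, ⟨j, Nat.lt_of_succ_lt hj⟩)) =
      ∑ a : A, x (s'', a, ⟨j + 1, hj⟩))

lemma walkVec_feas (N : S → A → S) (s : S) (k : ℕ) (hk : 0 < k) (w : ℕ → A)
    (hw : stSeq N s w k = s) : Feas N s k hk (walkVec N s k w) := by
  refine ⟨fun p => ?_, ?_, fun s' a hs => ?_, fun s' a' hs => ?_, fun s'' j hj => ?_⟩
  · unfold walkVec; split <;> norm_num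
  · show (∑ a : A, if stSeq N s w ((⟨0, hk⟩ : Fin k) : ℕ) = s ∧ w ((⟨0, hk⟩ : Fin k) : ℕ) = a then (1:ℝ) else 0) = 1
    simp [stSeq]
  · show (if stSeq N s w ((⟨0, hk⟩ : Fin k) : ℕ) = s' ∧ _ then (1:ℝ) else 0) = 0
    rw [if_neg]
    rintro ⟨h1, -⟩
    exact hs (h1.symm.trans rfl)
  · show (if stSeq N s w ((⟨k-1, by omega⟩ : Fin k) : ℕ) = s' ∧ w ((⟨k-1, by omega⟩ : Fin k) : ℕ) = a' then (1:ℝ) else 0) = 0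
    rw [if_neg]
    rintro ⟨h1, h2⟩
    apply hs
    have hks : k - 1 + 1 = k := by omega
    have : stSeq N s w (k - 1 + 1) = N (stSeq N s w (k-1)) (w (k-1)) := rfl
    rw [hks, hw] at this
    rw [← h1, ← h2, ← this]
  · show (∑ p ∈ Finset.univ.filter (fun p : S × A => N p.1 p.2 = s''),
        if stSeq N s w j = p.1 ∧ w j = p.2 then (1:ℝ) else 0) =
      ∑ a : A, if stSeq N s w (j+1) = s'' ∧ w (j+1) = a then (1:ℝ) else 0
    have hL : (∑ p ∈ Finset.univ.filter (fun p : S × A => N p.1 p.2 = s''),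
        if stSeq N s w j = p.1 ∧ w j = p.2 then (1:ℝ) else 0) =
        ∑ p ∈ Finset.univ.filter (fun p : S × A => N p.1 p.2 = s''),
        if p = (stSeq N s w j, w j) then (1:ℝ) else 0 := by
      refine Finset.sum_congr rfl fun p _ => ?_
      refine if_congr ?_ rfl rfl
      constructor
      · rintro ⟨h1, h2⟩; exact Prod.ext h1.symm h2.symm
      · rintro rfl; exact ⟨rfl, rfl⟩
    rw [hL, Finset.sum_ite_eq' (Finset.univ.filter (fun p : S × A => N p.1 p.2 = s''))]
    have hst : stSeq N s w (j+1) = N (stSeq N s w j) (w j) := rfl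
    by_cases hc : stSeq N s w (j+1) = s''
    · rw [if_pos (by simp [← hst, hc])]
      simp [hc]
    · rw [if_neg (by simp [← hst, hc])]
      symm; apply Finset.sum_eq_zero; intro a _
      rw [if_neg]; rintro ⟨h1, -⟩; exact hc h1

lemma feas_slice (N : S → A → S) (s : S) (k : ℕ) (hk : 0 < k) (x : S × A × Fin k → ℝ)
    (hx : Feas N s k hk x) : ∀ t (ht : t < k), ∑ p : S × A, x (p.1, p.2, ⟨t, ht⟩) = 1 := by
  intro t
  induction t with
  | zero =>
    intro ht
    rw [Fintype.sum_prod_type, Finset.sum_eq_single s]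
    · exact hx.2.1
    · intro u _ hu
      exact Finset.sum_eq_zero fun a _ => hx.2.2.1 u a hu
    · simp
  | succ t ih =>
    intro ht
    have ht' : t < k := by omega
    calc ∑ p : S × A, x (p.1, p.2, ⟨t+1, ht⟩)
        = ∑ u : S, ∑ a : A, x (u, a, ⟨t+1, ht⟩) := Fintype.sum_prod_type ..
      _ = ∑ u : S, ∑ p ∈ Finset.univ.filter (fun p : S × A => N p.1 p.2 = u),
            x (p.1, p.2, ⟨t, ht'⟩) :=
          Finset.sum_congr rfl fun u _ => (hx.2.2.2.2 u t ht).symm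
      _ = ∑ p : S × A, x (p.1, p.2, ⟨t, ht'⟩) :=
          Finset.sum_fiberwise _ _ _
      _ = 1 := ih ht'

lemma feas_convex (N : S → A → S) (s : S) (k : ℕ) (hk : 0 < k) :
    Convex ℝ {x : S × A × Fin k → ℝ | Feas N s k hk x} := by
  rintro x ⟨h1, h2, h3, h4, h5⟩ y ⟨g1, g2, g3, g4, g5⟩ a b ha hb hab
  refine ⟨fun p => ?_, ?_, fun s' a' hs => ?_, fun s' a' hs => ?_, fun s'' j hj => ?_⟩
  · simp only [Pi.add_apply, Pi.smul_apply, smul_eq_mul]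
    exact add_nonneg (mul_nonneg ha (h1 p)) (mul_nonneg hb (g1 p))
  · simp only [Pi.add_apply, Pi.smul_apply, smul_eq_mul, Finset.sum_add_distrib,
      ← Finset.mul_sum, h2, g2]
    linarith
  · simp only [Pi.add_apply, Pi.smul_apply, smul_eq_mul, h3 s' a' hs, g3 s' a' hs]
    ring
  · simp only [Pi.add_apply, Pi.smul_apply, smul_eq_mul, h4 s' a' hs, g4 s' a' hs]
    ring
  · simp only [Pi.add_apply, Pi.smul_apply, smul_eq_mul, Finset.sum_add_distrib,
      ← Finset.mul_sum, h5 s'' j hj, g5 s'' j hj]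

open Classical in
/-- pick an action with positive `x`-value at `(u, ·, i)`, if one exists. -/
noncomputable def pickA [Nonempty A] (k : ℕ) (x : S × A × Fin k → ℝ) (i : Fin k) (u : S) : A :=
  if h : ∃ a, 0 < x (u, a, i) then h.choose else Classical.arbitrary A

open Classical in
lemma pickA_spec [Nonempty A] (k : ℕ) (x : S × A × Fin k → ℝ) (i : Fin k) (u : S)
    (h : ∃ a, 0 < x (u, a, i)) : 0 < x (u, pickA k x i u, i) := by
  rw [pickA, dif_pos h]; exact h.choose_spec

noncomputable def pickSt [Nonempty A] (N : S → A → S) (s : S) (k : ℕ)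
    (x : S × A × Fin k → ℝ) : ℕ → S
  | 0 => s
  | t + 1 => if h : t < k then
      N (pickSt N s k x t) (pickA k x ⟨t, h⟩ (pickSt N s k x t)) else pickSt N s k x t

lemma exists_good_walk (N : S → A → S) (s : S) (k : ℕ) (hk : 0 < k)
    (x : S × A × Fin k → ℝ) (hx : Feas N s k hk x) :
    ∃ w : ℕ → A, stSeq N s w k = s ∧ ∀ i : Fin k, 0 < x (stSeq N s w i, w i, i) := by
  have hA : Nonempty A := by
    by_contra h
    rw [not_nonempty_iff] at h
    have := hx.2.1
    rw [Finset.univ_eq_empty, Finset.sum_empty] at this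
    norm_num at this
  classical
  set w : ℕ → A := fun t => if h : t < k then pickA k x ⟨t, h⟩ (pickSt N s k x t)
    else Classical.arbitrary A with hwdef
  have hst : ∀ t, t ≤ k → stSeq N s w t = pickSt N s k x t := by
    intro t
    induction t with
    | zero => intro _; rfl
    | succ t ih =>
      intro ht
      have ht' : t < k := by omega
      show N (stSeq N s w t) (w t) = _
      rw [ih (by omega), hwdef]
      simp only [dif_pos ht']
      rw [pickSt, dif_pos ht']
  have hmass : ∀ t (ht : t < k), 0 < ∑ a : A, x (pickSt N s k x t, a, ⟨t, ht⟩) := by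
    intro t
    induction t with
    | zero =>
      intro ht
      show (0:ℝ) < ∑ a : A, x (s, a, ⟨0, ht⟩)
      rw [hx.2.1]; norm_num
    | succ t ih =>
      intro ht
      have ht' : t < k := by omega
      have hpos := ih ht'
      have hex : ∃ a, 0 < x (pickSt N s k x t, a, (⟨t, ht'⟩ : Fin k)) := by
        by_contra hc
        push_neg at hc
        have : ∑ a : A, x (pickSt N s k x t, a, (⟨t, ht'⟩ : Fin k)) = 0 :=
          Finset.sum_eq_zero fun a _ => le_antisymm (hc a) (hx.1 _)
        rw [this] at hpos; norm_num at hpos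
      have hp := pickA_spec k x ⟨t, ht'⟩ (pickSt N s k x t) hex
      set u := pickSt N s k x t
      set a0 := pickA k x ⟨t, ht'⟩ u
      have hnext : pickSt N s k x (t+1) = N u a0 := by rw [pickSt, dif_pos ht']
      rw [hnext, ← hx.2.2.2.2 (N u a0) t ht]
      have hmem : (u, a0) ∈ Finset.univ.filter (fun p : S × A => N p.1 p.2 = N u a0) := by simp
      have hle := Finset.single_le_sum (f := fun p : S × A => x (p.1, p.2, (⟨t, ht'⟩ : Fin k)))
        (fun p _ => hx.1 _) hmem
      exact lt_of_lt_of_le hp hle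
  have hgood : ∀ i : Fin k, 0 < x (stSeq N s w i, w i, i) := by
    intro i
    have hi : (i : ℕ) < k := i.2
    have hex : ∃ a, 0 < x (pickSt N s k x i, a, (⟨i, hi⟩ : Fin k)) := by
      have hpos := hmass i hi
      by_contra hc
      push_neg at hc
      have : ∑ a : A, x (pickSt N s k x i, a, (⟨i, hi⟩ : Fin k)) = 0 :=
        Finset.sum_eq_zero fun a _ => le_antisymm (hc a) (hx.1 _)
      rw [this] at hpos; norm_num at hpos
    have hp := pickA_spec k x ⟨i, hi⟩ (pickSt N s k x i) hex
    have hw : w i = pickA k x ⟨i, hi⟩ (pickSt N s k x i) := by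
      rw [hwdef]; simp only [dif_pos hi]
    rw [hst i (le_of_lt hi), hw]
    exact hp
  refine ⟨w, ?_, hgood⟩
  have hk1 : k - 1 + 1 = k := by omega
  have hlast := hgood ⟨k - 1, by omega⟩
  by_contra hne
  have h4 := hx.2.2.2.1 (stSeq N s w (k-1)) (w (k-1)) ?_
  · rw [h4] at hlast; norm_num at hlast
  · intro hcon
    apply hne
    have : stSeq N s w (k - 1 + 1) = N (stSeq N s w (k-1)) (w (k-1)) := rfl
    rw [hk1] at this
    rw [this, hcon]

lemma feas_mem_hull (N : S → A → S) (s : S) (k : ℕ) (hk : 0 < k) :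
    ∀ n (x : S × A × Fin k → ℝ), Feas N s k hk x →
      (Finset.univ.filter fun p => x p ≠ 0).card ≤ n →
      x ∈ convexHull ℝ {x : S × A × Fin k → ℝ |
        ∃ w : ℕ → A, stSeq N s w k = s ∧ x = walkVec N s k w} := by
  intro n
  induction n using Nat.strong_induction_on with
  | _ n IH =>
  intro x hx hcard
  obtain ⟨w, hw, hgood⟩ := exists_good_walk N s k hk x hx
  set v := walkVec N s k w with hv
  have hvmem : v ∈ {x : S × A × Fin k → ℝ |
      ∃ w, stSeq N s w k = s ∧ x = walkVec N s k w} := ⟨w, hw, rfl⟩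
  have hvF : Feas N s k hk v := walkVec_feas N s k hk w hw
  have hne : (Finset.univ : Finset (Fin k)).Nonempty := ⟨⟨0, hk⟩, Finset.mem_univ _⟩
  set lam := Finset.univ.inf' hne (fun i : Fin k => x (stSeq N s w i, w i, i)) with hlam
  have hlam_le : ∀ i : Fin k, lam ≤ x (stSeq N s w i, w i, i) :=
    fun i => Finset.inf'_le _ (Finset.mem_univ i)
  have hlam_pos : 0 < lam := by
    rw [hlam, Finset.lt_inf'_iff]
    exact fun i _ => hgood i
  have hslice := feas_slice N s k hk x hx
  have hsl : ∀ i : Fin k, ∑ p : S × A, x (p.1, p.2, i) = 1 := by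
    intro i
    have := hslice i i.2
    exact this
  have hlam_le1 : lam ≤ 1 := by
    have h0 := hlam_le ⟨0, hk⟩
    have hle := Finset.single_le_sum (f := fun p : S × A => x (p.1, p.2, (⟨0, hk⟩ : Fin k)))
      (fun p _ => hx.1 _) (Finset.mem_univ (s, w 0))
    rw [hsl ⟨0, hk⟩] at hle
    exact le_trans h0 hle
  have hv01 : ∀ p, v p = 0 ∨ (v p = 1 ∧ lam ≤ x p) := by
    rintro ⟨u, a, i⟩
    by_cases hc : stSeq N s w i = u ∧ w i = a
    · right
      obtain ⟨h1, h2⟩ := hc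
      constructor
      · show (if stSeq N s w ((i : Fin k) : ℕ) = u ∧ w ((i : Fin k) : ℕ) = a then (1:ℝ) else 0) = 1
        rw [if_pos ⟨h1, h2⟩]
      · have := hlam_le i
        rw [h1, h2] at this
        exact this
    · left
      show (if stSeq N s w ((i : Fin k) : ℕ) = u ∧ w ((i : Fin k) : ℕ) = a then (1:ℝ) else 0) = 0
      rw [if_neg hc]
  rcases eq_or_lt_of_le hlam_le1 with heq | hlt
  · -- lam = 1 : x is itself a walk vector
    have hxv : x = v := by
      funext p
      obtain ⟨u, a, i⟩ := p
      rcases hv01 (u, a, i) with h0 | ⟨h1, hle⟩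
      · rw [h0]
        by_contra hne0
        have hxpos : 0 < x (u, a, i) := lt_of_le_of_ne (hx.1 _) (Ne.symm hne0)
        -- the entry (stSeq i, w i) has value ≥ lam = 1; adding x (u,a,i) > 0 exceeds slice 1
        have hcne : (stSeq N s w i, w i) ≠ (u, a) := by
          intro hcc
          have hv1 : v (u, a, i) = 1 := by
            show (if stSeq N s w ((i : Fin k) : ℕ) = u ∧ w ((i : Fin k) : ℕ) = a then (1:ℝ) else 0) = 1
            rw [if_pos ⟨congrArg Prod.fst hcc, congrArg Prod.snd hcc⟩]
          rw [hv1] at h0; norm_num at h0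
        have hsum : x (stSeq N s w i, w i, i) + x (u, a, i) ≤ 1 := by
          rw [← hsl i]
          calc x (stSeq N s w i, w i, i) + x (u, a, i)
              = ∑ p ∈ ({(stSeq N s w i, w i), (u, a)} : Finset (S × A)), x (p.1, p.2, i) := by
                rw [Finset.sum_pair hcne]
            _ ≤ ∑ p : S × A, x (p.1, p.2, i) :=
                Finset.sum_le_sum_of_subset_of_nonneg (Finset.subset_univ _)
                  (fun p _ _ => hx.1 _)
        have hge := hlam_le i
        rw [← heq] at hsum
        linarith
      · rw [h1]
        have hle2 := Finset.single_le_sum (f := fun p : S × A => x (p.1, p.2, i))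
          (fun p _ => hx.1 _) (Finset.mem_univ (u, a))
        rw [hsl i] at hle2
        rw [← heq]
        linarith
    rw [hxv]
    exact subset_convexHull ℝ _ hvmem
  · -- lam < 1 : peel off the walk v and recurse
    have h1l : 0 < 1 - lam := by linarith
    set x' : S × A × Fin k → ℝ := fun p => (1 - lam)⁻¹ * (x p - lam * v p) with hx'def
    have hx'0 : ∀ p, x p = 0 → x' p = 0 := by
      intro p hp
      rcases hv01 p with h | ⟨h, hle⟩
      · simp [hx'def, hp, h]
      · exfalso; rw [hp] at hle; linarith
    have hx'nn : ∀ p, 0 ≤ x' p := by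
      intro p
      rcases hv01 p with h | ⟨h, hle⟩
      · rw [hx'def]
        simp only [h, mul_zero, sub_zero]
        exact mul_nonneg (inv_nonneg.2 h1l.le) (hx.1 p)
      · rw [hx'def]
        simp only [h, mul_one]
        exact mul_nonneg (inv_nonneg.2 h1l.le) (by linarith)
    have hx'F : Feas N s k hk x' := by
      refine ⟨hx'nn, ?_, fun s' a hs => ?_, fun s' a hs => ?_, fun s'' j hj => ?_⟩
      · simp only [hx'def]
        rw [← Finset.mul_sum, Finset.sum_sub_distrib, ← Finset.mul_sum, hx.2.1, hvF.2.1]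
        field_simp
      · simp only [hx'def]
        rw [hx.2.2.1 s' a hs, hvF.2.2.1 s' a hs]
        ring
      · simp only [hx'def]
        rw [hx.2.2.2.1 s' a hs, hvF.2.2.2.1 s' a hs]
        ring
      · simp only [hx'def]
        rw [← Finset.mul_sum, ← Finset.mul_sum, Finset.sum_sub_distrib, Finset.sum_sub_distrib,
          ← Finset.mul_sum, ← Finset.mul_sum, hx.2.2.2.2 s'' j hj, hvF.2.2.2.2 s'' j hj]
    have hsub : (Finset.univ.filter fun p => x' p ≠ 0) ⊆
        (Finset.univ.filter fun p => x p ≠ 0) := by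
      intro p hp
      simp only [Finset.mem_filter, Finset.mem_univ, true_and] at hp ⊢
      intro h0; exact hp (hx'0 p h0)
    obtain ⟨i0, -, hi0⟩ := Finset.exists_mem_eq_inf' hne
      (fun i : Fin k => x (stSeq N s w i, w i, i))
    have hxp0 : x (stSeq N s w i0, w i0, i0) = lam := by rw [hlam, hi0]
    have hvp0 : v (stSeq N s w i0, w i0, i0) = 1 := by
      show (if stSeq N s w ((i0 : Fin k) : ℕ) = stSeq N s w i0 ∧
          w ((i0 : Fin k) : ℕ) = w i0 then (1:ℝ) else 0) = 1
      rw [if_pos ⟨rfl, rfl⟩]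
    have hp0x : (stSeq N s w i0, w i0, i0) ∈ (Finset.univ.filter fun p => x p ≠ 0) := by
      simp only [Finset.mem_filter, Finset.mem_univ, true_and]
      rw [hxp0]
      exact ne_of_gt hlam_pos
    have hp0x' : (stSeq N s w i0, w i0, i0) ∉ (Finset.univ.filter fun p => x' p ≠ 0) := by
      simp only [Finset.mem_filter, Finset.mem_univ, true_and, not_not]
      rw [hx'def]
      simp only [hxp0, hvp0, mul_one, sub_self, mul_zero]
    have hcard' : (Finset.univ.filter fun p => x' p ≠ 0).card < n := by
      refine lt_of_lt_of_le ?_ hcard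
      exact Finset.card_lt_card ((Finset.ssubset_iff_of_subset hsub).2
        ⟨_, hp0x, hp0x'⟩)
    have hx'mem := IH _ hcard' x' hx'F le_rfl
    have hcomb : x = lam • v + (1 - lam) • x' := by
      funext p
      simp only [Pi.add_apply, Pi.smul_apply, smul_eq_mul, hx'def]
      field_simp
      ring
    rw [hcomb]
    exact (convex_convexHull ℝ _) (subset_convexHull ℝ _ hvmem) hx'mem
      hlam_pos.le h1l.le (by ring)

end WalkPoly

/-- Fix a state `s`, a length `k > 0`, and the ADMDP transition graph
determined by `N`.  The convex hull of the vectors `x(c)` of the closed walks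
`c ∈ C_{(s,k)}` (walks of length `k` that start and end at `s`) is exactly the polytope
cut out by: nonnegativity; `∑_a x_{(s,a,1)} = 1`; `x_{(s',a,1)} = 0` for `s' ≠ s`;
`x_{(s',a',k)} = 0` for `(s',a') ∉ I(s) = {(s',a') : N(s',a') = s}`; and the flow
conservation constraints
`∑_{(s',a') ∈ I(s'')} x_{(s',a',i-1)} = ∑_a x_{(s'',a,i)}` for all `s''` and `2 ≤ i ≤ k`. -/
theorem walk_polytope_characterization
    {S A : Type*} [Fintype S] [Fintype A] [DecidableEq S] [DecidableEq A]
    (N : S → A → S) (s : S) (k : ℕ) (hk : 0 < k) :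
    convexHull ℝ {x : S × A × Fin k → ℝ |
        ∃ w : ℕ → A, stSeq N s w k = s ∧ x = walkVec N s k w} =
      {x : S × A × Fin k → ℝ |
        (∀ p, 0 ≤ x p) ∧
        (∑ a : A, x (s, a, ⟨0, hk⟩) = 1) ∧
        (∀ (s' : S) (a : A), s' ≠ s → x (s', a, ⟨0, hk⟩) = 0) ∧
        (∀ (s' : S) (a' : A), N s' a' ≠ s → x (s', a', ⟨k - 1, by omega⟩) = 0) ∧
        (∀ (s'' : S) (j : ℕ) (hj : j + 1 < k),
          (∑ p ∈ Finset.univ.filter (fun p : S × A => N p.1 p.2 = s''),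
              x (p.1, p.2, ⟨j, by omega⟩)) =
            ∑ a : A, x (s'', a, ⟨j + 1, hj⟩))} := by
  have hset : ({x : S × A × Fin k → ℝ |
        (∀ p, 0 ≤ x p) ∧
        (∑ a : A, x (s, a, ⟨0, hk⟩) = 1) ∧
        (∀ (s' : S) (a : A), s' ≠ s → x (s', a, ⟨0, hk⟩) = 0) ∧
        (∀ (s' : S) (a' : A), N s' a' ≠ s → x (s', a', ⟨k - 1, by omega⟩) = 0) ∧
        (∀ (s'' : S) (j : ℕ) (hj : j + 1 < k),
          (∑ p ∈ Finset.univ.filter (fun p : S × A => N p.1 p.2 = s''),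
              x (p.1, p.2, ⟨j, by omega⟩)) =
            ∑ a : A, x (s'', a, ⟨j + 1, hj⟩))} : Set (S × A × Fin k → ℝ)) =
      {x | WalkPoly.Feas N s k hk x} := rfl
  rw [hset]
  apply Set.Subset.antisymm
  · exact convexHull_min
      (by rintro y ⟨w, hw, rfl⟩; exact WalkPoly.walkVec_feas N s k hk w hw)
      (WalkPoly.feas_convex N s k hk)
  · intro x hx
    exact WalkPoly.feas_mem_hull N s k hk _ x hx le_rfl
end

section
/- For any online learning algorithm A and any |S| > 3, |A| ≥ 1, there exists a deterministic MDP M with |S| states and |A| actions (namely the cycle MDP in which every action moves state s_i to s_{i+1 mod |S|}) and a sequence of loss functions ℓ_1,…,ℓ_T : S×A → [0,1] such that the regret of A on M against the best stationary deterministic policy in hindsight is at least Ω(√(|S|·T·log|A|)). -/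
open Finset

/-- splitting a sum over `range (a*b)` by division with remainder. -/
lemma admdp_sum_range_mul {M : Type*} [AddCommMonoid M] (F : ℕ → M) (a b : ℕ) :
    ∑ t ∈ range (a*b), F t = ∑ q ∈ range b, ∑ r ∈ range a, F (a*q+r) := by
  induction b with
  | zero => simp
  | succ b ih =>
    have : a*(b+1) = a*b + a := by ring
    rw [this, Finset.range_eq_Ico, ← Finset.sum_Ico_consecutive _ (Nat.zero_le (a*b)) (by omega),
      ← Finset.range_eq_Ico, Finset.sum_Ico_eq_sum_range, ih, Finset.sum_range_succ]
    simp only [Nat.add_sub_cancel_left, Nat.add_sub_cancel]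

lemma admdp_two_pow_sum (j : ℕ) : ∑ i ∈ range j, 2^i < 2^j := by
  induction j with
  | zero => simp
  | succ j ih => rw [Finset.sum_range_succ]; rw [pow_succ]; omega

lemma admdp_v_lt (b : ℕ → Bool) (d : ℕ) :
    (∑ j' ∈ range d, cond (b j') (2^j') 0) < 2^d := by
  calc (∑ j' ∈ range d, cond (b j') (2^j') 0) ≤ ∑ j' ∈ range d, 2^j' := by
        apply Finset.sum_le_sum; intro i _; cases b i <;> simp
    _ < 2^d := admdp_two_pow_sum d

lemma admdp_bit_of_v (b : ℕ → Bool) (d j : ℕ) (hj : j < d) :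
    (∑ j' ∈ range d, cond (b j') (2^j') 0) / 2^j % 2 = cond (b j) 1 0 := by
  have hsplit : (∑ j' ∈ range d, cond (b j') (2^j') 0)
      = (∑ j' ∈ range j, cond (b j') (2^j') 0)
        + 2^j * (cond (b j) 1 0 + 2 * ∑ i ∈ range (d - (j+1)), cond (b (j+1+i)) (2^i) 0) := by
    rw [Finset.range_eq_Ico, ← Finset.sum_Ico_consecutive _ (Nat.zero_le (j+1)) hj,
      ← Finset.range_eq_Ico, Finset.sum_range_succ]
    rw [Finset.sum_Ico_eq_sum_range]
    have : ∀ i, cond (b (j+1+i)) (2^(j+1+i)) 0 = 2^j * (2 * cond (b (j+1+i)) (2^i) 0) := by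
      intro i; cases b (j+1+i) <;> simp [pow_add, pow_succ]; ring
    rw [Finset.sum_congr rfl fun i _ => this i, ← Finset.mul_sum, ← Finset.mul_sum]
    cases b j <;> simp <;> ring
  rw [hsplit]
  have hA : (∑ j' ∈ range j, cond (b j') (2^j') 0) < 2^j := admdp_v_lt b j
  rw [Nat.add_mul_div_left _ _ (Nat.pow_pos (by norm_num)),
    Nat.div_eq_of_lt hA, zero_add, Nat.add_mul_mod_self_left]
  cases b j <;> simp

section Moments

variable {V : Type*} [Fintype V] [DecidableEq V]

lemma admdp_flip_zero (t : V) (h : (V → Bool) → ℝ)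
    (hh : ∀ σ, h (Function.update σ t (!σ t)) = h σ) :
    ∑ σ : V → Bool, (if σ t then (1:ℝ) else -1) * h σ = 0 := by
  have hinv : Function.Involutive (fun σ : V → Bool => Function.update σ t (!σ t)) := by
    intro σ
    funext u
    by_cases hu : u = t
    · subst hu; simp
    · simp [Function.update_of_ne hu]
  set e := Function.Involutive.toPerm _ hinv with he
  have key := Equiv.sum_comp e (fun σ => (if σ t then (1:ℝ) else -1) * h σ)
  have : ∀ σ : V → Bool,
      (if (e σ) t then (1:ℝ) else -1) * h (e σ)
        = -((if σ t then (1:ℝ) else -1) * h σ) := by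
    intro σ
    have h1 : (e σ) = Function.update σ t (!σ t) := rfl
    rw [h1, hh σ]
    cases hσ : σ t <;> simp [hσ]
  rw [Finset.sum_congr rfl (fun σ _ => this σ), Finset.sum_neg_distrib] at key
  linarith

lemma admdp_delta_flip (c : ℕ → V) (k : ℕ) (hc : ∀ i, i < k → c i ≠ c k) (σ : V → Bool)
    (x : Bool) :
    (∑ i ∈ range k, (if (Function.update σ (c k) x) (c i) then (1:ℝ) else -1))
      = ∑ i ∈ range k, (if σ (c i) then (1:ℝ) else -1) := by
  apply Finset.sum_congr rfl
  intro i hi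
  rw [Function.update_of_ne (hc i (Finset.mem_range.mp hi))]

lemma admdp_S2 (c : ℕ → V) (k : ℕ) (hc : ∀ i j, i < k → j < k → i ≠ j → c i ≠ c j) :
    ∑ σ : V → Bool, (∑ i ∈ range k, (if σ (c i) then (1:ℝ) else -1))^2
      = k * (Fintype.card (V → Bool) : ℝ) := by
  induction k with
  | zero => simp
  | succ k ih =>
    have hck : ∀ i, i < k → c i ≠ c k := fun i hi => hc i k (by omega) (by omega) (by omega)
    have expand : ∀ σ : V → Bool,
        (∑ i ∈ range (k+1), (if σ (c i) then (1:ℝ) else -1))^2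
          = (∑ i ∈ range k, (if σ (c i) then (1:ℝ) else -1))^2
            + 2 * ((if σ (c k) then (1:ℝ) else -1)
                * (∑ i ∈ range k, (if σ (c i) then (1:ℝ) else -1))) + 1 := by
      intro σ
      rw [Finset.sum_range_succ]
      have hsq : (if σ (c k) then (1:ℝ) else -1)^2 = 1 := by cases σ (c k) <;> norm_num
      nlinarith [hsq]
    rw [Finset.sum_congr rfl (fun σ _ => expand σ)]
    rw [Finset.sum_add_distrib, Finset.sum_add_distrib, ih (fun i j hi hj => hc i j (by omega) (by omega)),
      ← Finset.mul_sum, admdp_flip_zero (c k) _ (fun σ => admdp_delta_flip c k hck σ _),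
      Finset.sum_const, nsmul_eq_mul, mul_one, Finset.card_univ]
    push_cast
    ring

lemma admdp_S4 (c : ℕ → V) (k : ℕ) (hc : ∀ i j, i < k → j < k → i ≠ j → c i ≠ c j) :
    ∑ σ : V → Bool, (∑ i ∈ range k, (if σ (c i) then (1:ℝ) else -1))^4
      ≤ 3 * k^2 * (Fintype.card (V → Bool) : ℝ) := by
  induction k with
  | zero => simp
  | succ k ih =>
    have hck : ∀ i, i < k → c i ≠ c k := fun i hi => hc i k (by omega) (by omega) (by omega)
    have expand : ∀ σ : V → Bool,
        (∑ i ∈ range (k+1), (if σ (c i) then (1:ℝ) else -1))^4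
          = (∑ i ∈ range k, (if σ (c i) then (1:ℝ) else -1))^4
            + (if σ (c k) then (1:ℝ) else -1)
                * (4 * (∑ i ∈ range k, (if σ (c i) then (1:ℝ) else -1))^3
                    + 4 * (∑ i ∈ range k, (if σ (c i) then (1:ℝ) else -1)))
            + 6 * (∑ i ∈ range k, (if σ (c i) then (1:ℝ) else -1))^2 + 1 := by
      intro σ
      rw [Finset.sum_range_succ]
      have hsq : (if σ (c k) then (1:ℝ) else -1)^2 = 1 := by cases σ (c k) <;> norm_num
      cases σ (c k) <;> simp <;> ring
    rw [Finset.sum_congr rfl (fun σ _ => expand σ), Finset.sum_add_distrib,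
      Finset.sum_add_distrib, Finset.sum_add_distrib]
    have h0 : ∑ σ : V → Bool, (if σ (c k) then (1:ℝ) else -1)
        * (4 * (∑ i ∈ range k, (if σ (c i) then (1:ℝ) else -1))^3
            + 4 * (∑ i ∈ range k, (if σ (c i) then (1:ℝ) else -1))) = 0 := by
      apply admdp_flip_zero (c k)
      intro σ
      rw [admdp_delta_flip c k hck σ _]
    have h2 : ∑ σ : V → Bool, 6 * (∑ i ∈ range k, (if σ (c i) then (1:ℝ) else -1))^2
        = 6 * (k * (Fintype.card (V → Bool) : ℝ)) := by
      rw [← Finset.mul_sum, admdp_S2 c k (fun i j hi hj => hc i j (by omega) (by omega))]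
    have h4 := ih (fun i j hi hj => hc i j (by omega) (by omega))
    rw [h0, h2, Finset.sum_const, nsmul_eq_mul, mul_one, Finset.card_univ]
    push_cast
    have hN : (0:ℝ) ≤ (Fintype.card (V → Bool) : ℝ) := Nat.cast_nonneg _
    nlinarith [hN]

lemma admdp_S1 (c : ℕ → V) (k : ℕ) (hk : 1 ≤ k)
    (hc : ∀ i j, i < k → j < k → i ≠ j → c i ≠ c j) :
    (Fintype.card (V → Bool) : ℝ) * Real.sqrt (k / 3)
      ≤ ∑ σ : V → Bool, |∑ i ∈ range k, (if σ (c i) then (1:ℝ) else -1)| := by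
  set N : ℝ := (Fintype.card (V → Bool) : ℝ) with hNdef
  have hN : (0:ℝ) < N := by
    have := Fintype.card_pos (α := V → Bool)
    positivity
  set Δ : (V → Bool) → ℝ := fun σ => ∑ i ∈ range k, (if σ (c i) then (1:ℝ) else -1) with hΔ
  set S1 : ℝ := ∑ σ : V → Bool, |Δ σ| with hS1
  set S3 : ℝ := ∑ σ : V → Bool, |Δ σ|^3 with hS3
  have hS1nn : 0 ≤ S1 := Finset.sum_nonneg fun σ _ => abs_nonneg _
  have hS3nn : 0 ≤ S3 := Finset.sum_nonneg fun σ _ => by positivity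
  have hs2 : ∑ σ : V → Bool, (Δ σ)^2 = k * N := admdp_S2 c k hc
  have hs4 : ∑ σ : V → Bool, (Δ σ)^4 ≤ 3 * k^2 * N := admdp_S4 c k hc
  -- Cauchy–Schwarz 1 : (∑ Δ²)² ≤ S1 * S3
  have cs1 : (∑ σ : V → Bool, (Δ σ)^2)^2 ≤ S1 * S3 := by
    have key := Finset.sum_mul_sq_le_sq_mul_sq Finset.univ
      (fun σ : V → Bool => Real.sqrt |Δ σ|) (fun σ => |Δ σ| * Real.sqrt |Δ σ|)
    have e1 : ∀ σ : V → Bool,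
        Real.sqrt |Δ σ| * (|Δ σ| * Real.sqrt |Δ σ|) = (Δ σ)^2 := by
      intro σ
      rw [show Real.sqrt |Δ σ| * (|Δ σ| * Real.sqrt |Δ σ|)
        = (Real.sqrt |Δ σ| * Real.sqrt |Δ σ|) * |Δ σ| by ring,
        Real.mul_self_sqrt (abs_nonneg _), abs_mul_abs_self, ← pow_two]
    have e2 : ∀ σ : V → Bool, (Real.sqrt |Δ σ|)^2 = |Δ σ| :=
      fun σ => Real.sq_sqrt (abs_nonneg _)
    have e3 : ∀ σ : V → Bool, (|Δ σ| * Real.sqrt |Δ σ|)^2 = |Δ σ|^3 := by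
      intro σ
      rw [mul_pow, Real.sq_sqrt (abs_nonneg _)]
      ring
    calc (∑ σ : V → Bool, (Δ σ)^2)^2
        = (∑ σ : V → Bool, Real.sqrt |Δ σ| * (|Δ σ| * Real.sqrt |Δ σ|))^2 := by
          rw [Finset.sum_congr rfl (fun σ _ => e1 σ)]
      _ ≤ (∑ σ : V → Bool, (Real.sqrt |Δ σ|)^2)
            * (∑ σ : V → Bool, (|Δ σ| * Real.sqrt |Δ σ|)^2) := key
      _ = S1 * S3 := by
          rw [Finset.sum_congr rfl (fun σ _ => e2 σ), Finset.sum_congr rfl (fun σ _ => e3 σ)]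
  -- Cauchy–Schwarz 2 : S3² ≤ (∑ Δ²)(∑ Δ⁴)
  have cs2 : S3^2 ≤ (∑ σ : V → Bool, (Δ σ)^2) * (∑ σ : V → Bool, (Δ σ)^4) := by
    have key := Finset.sum_mul_sq_le_sq_mul_sq Finset.univ
      (fun σ : V → Bool => |Δ σ|) (fun σ => (Δ σ)^2)
    have e1 : ∀ σ : V → Bool, |Δ σ| * (Δ σ)^2 = |Δ σ|^3 := by
      intro σ
      rw [← sq_abs (Δ σ)]
      ring
    calc S3^2 = (∑ σ : V → Bool, |Δ σ| * (Δ σ)^2)^2 := by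
          rw [Finset.sum_congr rfl (fun σ _ => e1 σ)]
      _ ≤ (∑ σ : V → Bool, |Δ σ|^2) * (∑ σ : V → Bool, ((Δ σ)^2)^2) := key
      _ = (∑ σ : V → Bool, (Δ σ)^2) * (∑ σ : V → Bool, (Δ σ)^4) := by
          rw [Finset.sum_congr rfl (fun σ _ => sq_abs (Δ σ)),
            Finset.sum_congr rfl (fun σ _ => by rw [← pow_mul] : ∀ σ ∈ Finset.univ,
              ((Δ σ)^2)^2 = (Δ σ)^4)]
  rw [hs2] at cs1 cs2
  -- From cs2 and hs4 : S3 ≤ k² N / x where x = sqrt (k/3)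
  set x : ℝ := Real.sqrt ((k:ℝ) / 3) with hx
  have hk1 : (1:ℝ) ≤ (k:ℝ) := by exact_mod_cast hk
  have hxpos : 0 < x := Real.sqrt_pos.mpr (by positivity)
  have hx2 : x^2 = (k:ℝ)/3 := Real.sq_sqrt (by positivity)
  have hS3sq : S3^2 ≤ 3 * (k:ℝ)^3 * N^2 := by
    calc S3^2 ≤ (k * N) * (∑ σ : V → Bool, (Δ σ)^4) := cs2
      _ ≤ (k * N) * (3 * (k:ℝ)^2 * N) := by
          apply mul_le_mul_of_nonneg_left hs4 (by positivity)
      _ = 3 * (k:ℝ)^3 * N^2 := by ring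
  have hxS3 : x * S3 ≤ (k:ℝ)^2 * N := by
    have hsq : (x * S3)^2 ≤ ((k:ℝ)^2 * N)^2 := by
      calc (x * S3)^2 = x^2 * S3^2 := by ring
        _ ≤ ((k:ℝ)/3) * (3 * (k:ℝ)^3 * N^2) := by
            rw [hx2]; apply mul_le_mul_of_nonneg_left hS3sq (by positivity)
        _ = ((k:ℝ)^2 * N)^2 := by ring
    have h := Real.sqrt_le_sqrt hsq
    rwa [Real.sqrt_sq (by positivity), Real.sqrt_sq (by positivity)] at h
  -- conclude
  rcases hS3nn.eq_or_lt with h0 | hpos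
  · exfalso
    rw [← h0, mul_zero] at cs1
    have hkN : (0:ℝ) < ((k:ℝ) * N)^2 := by positivity
    linarith
  · -- (k N)² ≤ S1 S3 and x S3 ≤ k² N give N x ≤ S1
    have h1 : N * x * S3 ≤ S1 * S3 := by
      calc N * x * S3 = N * (x * S3) := by ring
        _ ≤ N * ((k:ℝ)^2 * N) := mul_le_mul_of_nonneg_left hxS3 hN.le
        _ = ((k:ℝ) * N)^2 := by ring
        _ ≤ S1 * S3 := cs1
    exact le_of_mul_le_mul_right h1 hpos

end Moments

section Pair

variable {V : Type*} [Fintype V] [DecidableEq V]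

lemma admdp_pair (t : V) (F : (V → Bool) → ℝ)
    (hF : ∀ σ, F σ + F (Function.update σ t (!σ t)) = 1) :
    ∑ σ : V → Bool, F σ = (Fintype.card (V → Bool) : ℝ) / 2 := by
  have hinv : Function.Involutive (fun σ : V → Bool => Function.update σ t (!σ t)) := by
    intro σ
    funext u
    by_cases hu : u = t
    · subst hu; simp
    · simp [Function.update_of_ne hu]
  have key := Equiv.sum_comp (Function.Involutive.toPerm _ hinv) F
  have h2 : (∑ σ : V → Bool, F σ) + (∑ σ : V → Bool, F σ)
      = (Fintype.card (V → Bool) : ℝ) := by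
    nth_rewrite 2 [← key]
    rw [← Finset.sum_add_distrib]
    have : ∀ σ : V → Bool, F σ + F ((Function.Involutive.toPerm _ hinv) σ) = 1 := fun σ => hF σ
    rw [Finset.sum_congr rfl (fun σ _ => this σ), Finset.sum_const, nsmul_eq_mul,
      mul_one, Finset.card_univ]
  linarith

end Pair


set_option maxHeartbeats 2000000 in
/-- (Regret lower bound, Theorem 4 of the paper.)  For any online
learning algorithm `alg` and any `|S| > 3`, `|A| ≥ 1`, there exists a deterministic MDP
`M` with `|S|` states and `|A|` actions — namely the cycle MDP on `S = Fin m` in which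
every action moves state `s_i` to `s_{i+1 mod m}`, so the state at time `t` is
`t mod m` — and a sequence of losses `ℓ_1, …, ℓ_T` with values in `[0,1]` such that the
regret of `alg` against the best stationary deterministic policy in hindsight is at least
`Ω(√(|S|·T·log|A|))`.

The algorithm is modelled by the probabilities `alg ℓ t a` of playing action `a` at round
`t`, which are adapted: they may depend only on the losses revealed before round `t`.
Since every action moves the cycle forward, the state sequence is `t ↦ t mod m`
independently of the actions, and the expected loss of the algorithm is
`∑_t ∑_a alg ℓ t a · ℓ_t(s_t, a)`. -/
theorem admdp_regret_lower_bound :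
    ∃ c : ℝ, 0 < c ∧
      ∀ (m K : ℕ) (hm : 3 < m) (hK : 1 ≤ K),
      ∀ alg : (ℕ → Fin m → Fin K → ℝ) → ℕ → Fin K → ℝ,
        -- at each round the algorithm plays a probability distribution over actions
        (∀ ℓ t a, 0 ≤ alg ℓ t a) →
        (∀ ℓ t, ∑ a : Fin K, alg ℓ t a = 1) →
        -- the algorithm is adapted: its play at round `t` depends only on the losses of
        -- rounds before `t` (full-information feedback, oblivious adversary)
        (∀ (ℓ ℓ' : ℕ → Fin m → Fin K → ℝ) (t : ℕ), (∀ i < t, ℓ i = ℓ' i) →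
          alg ℓ t = alg ℓ' t) →
      ∃ T0 : ℕ, ∀ T : ℕ, T0 ≤ T →
      ∃ ℓ : ℕ → Fin m → Fin K → ℝ,
        (∀ t s a, 0 ≤ ℓ t s a ∧ ℓ t s a ≤ 1) ∧
        c * Real.sqrt ((m : ℝ) * (T : ℝ) * Real.log (K : ℝ)) ≤
          (∑ t ∈ Finset.range T, ∑ a : Fin K,
              alg ℓ t a * ℓ t ⟨t % m, Nat.mod_lt _ (by omega)⟩ a) -
            ⨅ π : Fin m → Fin K, ∑ t ∈ Finset.range T,
              ℓ t ⟨t % m, Nat.mod_lt _ (by omega)⟩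
                (π ⟨t % m, Nat.mod_lt _ (by omega)⟩) := by
  classical
  refine ⟨1/10, by norm_num, ?_⟩
  intro m K hm hK alg hpos hsum hadapt
  by_cases hK1 : K = 1
  · -- trivial case `K = 1` : the zero loss gives zero regret and the bound is `0`
    subst hK1
    refine ⟨0, fun T _ => ⟨fun _ _ _ => 0, fun t s a => by norm_num, ?_⟩⟩
    have h1 : (∑ t ∈ Finset.range T, ∑ a : Fin 1,
        alg (fun _ _ _ => (0:ℝ)) t a * (0:ℝ)) = 0 := by simp
    have h2 : (⨅ _π : Fin m → Fin 1, ∑ _t ∈ Finset.range T, (0:ℝ)) = 0 := by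
      rw [ciInf_const]
      simp
    simp only [h1, h2, Nat.cast_one, Real.log_one, mul_zero, Real.sqrt_zero, sub_zero]
    norm_num
  · have hK2 : 2 ≤ K := by omega
    set d := Nat.log 2 K with hddef
    have hd1 : 1 ≤ d := Nat.log_pos (by norm_num) hK2
    have h2d : 2^d ≤ K := Nat.pow_log_le_self 2 (by omega)
    have hKlt : K < 2^(d+1) := Nat.lt_pow_succ_log_self (by norm_num) K
    refine ⟨2*m*d, ?_⟩
    intro T hT
    set n := T / (m*d) with hndef
    have hmd : 0 < m*d := by positivity
    have hn2 : 2 ≤ n := (Nat.le_div_iff_mul_le hmd).mpr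
      (by calc 2*(m*d) = 2*m*d := by ring
            _ ≤ T := hT)
    set T' := m*(d*n) with hT'def
    have hT'le : T' ≤ T := by
      calc T' = n*(m*d) := by ring
        _ ≤ T := by rw [hndef]; exact Nat.div_mul_le_self T (m*d)
    have hT'pos : 0 < T' := by positivity
    have hTlt : T < 2*(m*(d*n)) := by
      have hdm := Nat.div_add_mod T (m*d)
      have hmod : T % (m*d) < m*d := Nat.mod_lt T hmd
      have h2 : m*d ≤ m*d*n := Nat.le_mul_of_pos_right _ (by omega)
      have h3 : 2*(m*(d*n)) = m*d*n + m*d*n := by ring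
      rw [← hndef] at hdm
      omega
    -- the coordinate of round `(s,j,i)`
    have hcoord : ∀ s j i, s < m → j < d → i < n → m*(n*j+i)+s < T' := by
      intro s j i hs hj hi
      have h1 : n*j + i + 1 ≤ d*n := by
        calc n*j+i+1 ≤ n*j+n := by omega
          _ = n*(j+1) := by ring
          _ ≤ n*d := Nat.mul_le_mul_left n (by omega)
          _ = d*n := by ring
      calc m*(n*j+i)+s < m*(n*j+i)+m := by omega
        _ = m*(n*j+i+1) := by ring
        _ ≤ m*(d*n) := Nat.mul_le_mul_left m h1
    set cmap : ℕ → ℕ → ℕ → Fin T' :=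
      fun s j i => ⟨(m*(n*j+i)+s) % T', Nat.mod_lt _ hT'pos⟩ with hcmap
    -- the per-block deviation
    set X : ℕ → ℕ → (Fin T' → Bool) → ℝ :=
      fun s j σ => ∑ i ∈ Finset.range n, (if σ (cmap s j i) then (1:ℝ) else -1) with hX
    set bbit : ℕ → ℕ → (Fin T' → Bool) → Bool :=
      fun s j σ => if X s j σ < 0 then true else false with hbbit
    set ep : ℕ → ℕ := fun t => t / m / n with hep
    set β : Fin K → ℕ → Bool := fun a j => decide (a.val / 2^j % 2 = 1) with hβ
    -- the losses
    set L : (Fin T' → Bool) → ℕ → Fin m → Fin K → ℝ := fun σ t _ a =>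
      if h : t < T' then (if β a (ep t) = σ ⟨t, h⟩ then 1 else 0) else 0 with hL
    -- the comparison policy
    set pol : (Fin T' → Bool) → Fin m → Fin K := fun σ s =>
      ⟨∑ j ∈ Finset.range d, cond (bbit s.val j σ) (2^j) 0,
        lt_of_lt_of_le (admdp_v_lt _ d) h2d⟩ with hpol
    set N : ℝ := (Fintype.card (Fin T' → Bool) : ℝ) with hN
    have hNpos : (0:ℝ) < N := by
      have := Fintype.card_pos (α := Fin T' → Bool)
      positivity
    -- the algorithm's expected loss, summed over the cube
    have stepA : ∑ σ : Fin T' → Bool, (∑ t ∈ Finset.range T, ∑ a : Fin K,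
        alg (L σ) t a * L σ t ⟨t % m, Nat.mod_lt _ (by omega)⟩ a)
        = (T' : ℝ) * N / 2 := by
      rw [Finset.sum_comm]
      have hval : ∀ t ∈ Finset.range T', (∑ σ : Fin T' → Bool, ∑ a : Fin K,
          alg (L σ) t a * L σ t ⟨t % m, Nat.mod_lt _ (by omega)⟩ a) = N / 2 := by
        intro t htmem
        have ht : t < T' := Finset.mem_range.mp htmem
        apply admdp_pair (⟨t, ht⟩ : Fin T')
        intro σ
        set σ' := Function.update σ (⟨t, ht⟩ : Fin T') (!σ ⟨t, ht⟩) with hσ'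
        have halg : alg (L σ') t = alg (L σ) t := by
          apply hadapt
          intro i hi
          funext s' a'
          simp only [hL]
          by_cases hiT : i < T'
          · rw [dif_pos hiT, dif_pos hiT]
            have hne : (⟨i, hiT⟩ : Fin T') ≠ ⟨t, ht⟩ :=
              Fin.ne_of_val_ne (by simpa using Nat.ne_of_lt hi)
            rw [hσ', Function.update_of_ne hne]
          · rw [dif_neg hiT, dif_neg hiT]
        have hb : σ' ⟨t, ht⟩ = !σ ⟨t, ht⟩ := Function.update_self _ _ _
        rw [halg, ← Finset.sum_add_distrib]
        have hterm : ∀ a : Fin K,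
            alg (L σ) t a * L σ t ⟨t % m, Nat.mod_lt _ (by omega)⟩ a
              + alg (L σ) t a * L σ' t ⟨t % m, Nat.mod_lt _ (by omega)⟩ a
            = alg (L σ) t a := by
          intro a
          simp only [hL, dif_pos ht, hb]
          rw [← mul_add]
          have : (if β a (ep t) = σ ⟨t, ht⟩ then (1:ℝ) else 0)
              + (if β a (ep t) = !σ ⟨t, ht⟩ then (1:ℝ) else 0) = 1 := by
            cases hc1 : β a (ep t) <;> cases hc2 : σ (⟨t, ht⟩ : Fin T') <;> simp
          rw [this, mul_one]
        rw [Finset.sum_congr rfl (fun a _ => hterm a), hsum]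
      have hsub : (∑ t ∈ Finset.range T, ∑ σ : Fin T' → Bool, ∑ a : Fin K,
          alg (L σ) t a * L σ t ⟨t % m, Nat.mod_lt _ (by omega)⟩ a)
          = ∑ t ∈ Finset.range T', ∑ σ : Fin T' → Bool, ∑ a : Fin K,
            alg (L σ) t a * L σ t ⟨t % m, Nat.mod_lt _ (by omega)⟩ a := by
        symm
        apply Finset.sum_subset (Finset.range_subset_range.mpr hT'le)
        intro t _ htnot
        have ht' : ¬ t < T' := by simpa using htnot
        simp [hL, dif_neg ht']
      rw [hsub, Finset.sum_congr rfl hval, Finset.sum_const, Finset.card_range,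
        nsmul_eq_mul]
      ring
    -- the comparison policy's loss, for each σ
    have stepB : ∀ σ : Fin T' → Bool, (∑ t ∈ Finset.range T,
        L σ t ⟨t % m, Nat.mod_lt _ (by omega)⟩ (pol σ ⟨t % m, Nat.mod_lt _ (by omega)⟩))
        = ∑ s ∈ Finset.range m, ∑ j ∈ Finset.range d, ((n:ℝ) - |X s j σ|)/2 := by
      intro σ
      have hsub : (∑ t ∈ Finset.range T,
          L σ t ⟨t % m, Nat.mod_lt _ (by omega)⟩ (pol σ ⟨t % m, Nat.mod_lt _ (by omega)⟩))
          = ∑ t ∈ Finset.range T',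
            L σ t ⟨t % m, Nat.mod_lt _ (by omega)⟩ (pol σ ⟨t % m, Nat.mod_lt _ (by omega)⟩) := by
        symm
        apply Finset.sum_subset (Finset.range_subset_range.mpr hT'le)
        intro t _ htnot
        have ht' : ¬ t < T' := by simpa using htnot
        simp [hL, dif_neg ht']
      have hblock : ∀ s ∈ Finset.range m, ∀ j ∈ Finset.range d,
          (∑ i ∈ Finset.range n,
            L σ (m*(n*j+i)+s) ⟨(m*(n*j+i)+s) % m, Nat.mod_lt _ (by omega)⟩
              (pol σ ⟨(m*(n*j+i)+s) % m, Nat.mod_lt _ (by omega)⟩))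
          = ((n:ℝ) - |X s j σ|)/2 := by
        intro s hsmem j hjmem
        have hs : s < m := Finset.mem_range.mp hsmem
        have hj : j < d := Finset.mem_range.mp hjmem
        have hterm : ∀ i ∈ Finset.range n,
          L σ (m*(n*j+i)+s) ⟨(m*(n*j+i)+s) % m, Nat.mod_lt _ (by omega)⟩
              (pol σ ⟨(m*(n*j+i)+s) % m, Nat.mod_lt _ (by omega)⟩)
          = (1 + (cond (bbit s j σ) 1 (-1))
              * (if σ (cmap s j i) then (1:ℝ) else -1))/2 := by
          intro i himem
          have hi : i < n := Finset.mem_range.mp himem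
          have htT' : m*(n*j+i)+s < T' := hcoord s j i hs hj hi
          have hmod : (m*(n*j+i)+s) % m = s := by
            rw [Nat.mul_add_mod, Nat.mod_eq_of_lt hs]
          have hepj : ep (m*(n*j+i)+s) = j := by
            simp only [hep]
            rw [Nat.mul_add_div (by omega), Nat.div_eq_of_lt hs, Nat.add_zero,
              Nat.mul_add_div (by omega), Nat.div_eq_of_lt hi, Nat.add_zero]
          have hfin : (⟨(m*(n*j+i)+s) % m, Nat.mod_lt _ (by omega)⟩ : Fin m) = ⟨s, hs⟩ :=
            Fin.ext hmod
          have hcm : (⟨m*(n*j+i)+s, htT'⟩ : Fin T') = cmap s j i :=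
            Fin.ext (by simp only [hcmap]; rw [Nat.mod_eq_of_lt htT'])
          have hbit : β (pol σ ⟨s, hs⟩) j = bbit s j σ := by
            simp only [hβ, hpol]
            rw [admdp_bit_of_v _ d j hj]
            cases bbit s j σ <;> simp
          rw [hfin]
          simp only [hL]
          rw [dif_pos htT', hepj, hbit, hcm]
          cases hbb : bbit s j σ <;> cases hσc : σ (cmap s j i) <;> norm_num
        rw [Finset.sum_congr rfl hterm]
        have hsplit : ∑ i ∈ Finset.range n, (1 + (cond (bbit s j σ) 1 (-1))
              * (if σ (cmap s j i) then (1:ℝ) else -1))/2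
            = ((n:ℝ) + (cond (bbit s j σ) 1 (-1)) * X s j σ)/2 := by
          rw [← Finset.sum_div, Finset.sum_add_distrib, ← Finset.mul_sum,
            Finset.sum_const, Finset.card_range, nsmul_eq_mul, mul_one]
        rw [hsplit]
        by_cases hXneg : X s j σ < 0
        · rw [show bbit s j σ = true by simp only [hbbit]; rw [if_pos hXneg],
            abs_of_neg hXneg]
          norm_num
        · rw [show bbit s j σ = false by simp only [hbbit]; rw [if_neg hXneg],
            abs_of_nonneg (le_of_not_gt hXneg)]
          norm_num
          ring
      calc (∑ t ∈ Finset.range T,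
            L σ t ⟨t % m, Nat.mod_lt _ (by omega)⟩ (pol σ ⟨t % m, Nat.mod_lt _ (by omega)⟩))
          = ∑ t ∈ Finset.range T',
            L σ t ⟨t % m, Nat.mod_lt _ (by omega)⟩
              (pol σ ⟨t % m, Nat.mod_lt _ (by omega)⟩) := hsub
        _ = ∑ j ∈ Finset.range d, ∑ i ∈ Finset.range n, ∑ s ∈ Finset.range m,
              L σ (m*(n*j+i)+s) ⟨(m*(n*j+i)+s) % m, Nat.mod_lt _ (by omega)⟩
                (pol σ ⟨(m*(n*j+i)+s) % m, Nat.mod_lt _ (by omega)⟩) := by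
            rw [hT'def, admdp_sum_range_mul _ m (d*n), show d*n = n*d from mul_comm d n,
              admdp_sum_range_mul _ n d]
        _ = ∑ j ∈ Finset.range d, ∑ s ∈ Finset.range m, ∑ i ∈ Finset.range n,
              L σ (m*(n*j+i)+s) ⟨(m*(n*j+i)+s) % m, Nat.mod_lt _ (by omega)⟩
                (pol σ ⟨(m*(n*j+i)+s) % m, Nat.mod_lt _ (by omega)⟩) :=
            Finset.sum_congr rfl (fun j _ => Finset.sum_comm)
        _ = ∑ s ∈ Finset.range m, ∑ j ∈ Finset.range d, ∑ i ∈ Finset.range n,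
              L σ (m*(n*j+i)+s) ⟨(m*(n*j+i)+s) % m, Nat.mod_lt _ (by omega)⟩
                (pol σ ⟨(m*(n*j+i)+s) % m, Nat.mod_lt _ (by omega)⟩) :=
            Finset.sum_comm
        _ = ∑ s ∈ Finset.range m, ∑ j ∈ Finset.range d, ((n:ℝ) - |X s j σ|)/2 :=
            Finset.sum_congr rfl (fun s hs => Finset.sum_congr rfl (fun j hj => hblock s hs j hj))
    -- the expected absolute deviations
    have stepC : ∀ s ∈ Finset.range m, ∀ j ∈ Finset.range d,
        N * Real.sqrt ((n:ℝ)/3) ≤ ∑ σ : Fin T' → Bool, |X s j σ| := by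
      intro s hsmem j hjmem
      have hs : s < m := Finset.mem_range.mp hsmem
      have hj : j < d := Finset.mem_range.mp hjmem
      have hc : ∀ i i', i < n → i' < n → i ≠ i' → cmap s j i ≠ cmap s j i' := by
        intro i i' hi hi' hne
        simp only [hcmap]
        intro hcontr
        rw [Fin.mk.injEq, Nat.mod_eq_of_lt (hcoord s j i hs hj hi),
          Nat.mod_eq_of_lt (hcoord s j i' hs hj hi')] at hcontr
        have h2 := Nat.add_right_cancel hcontr
        have h3 := Nat.eq_of_mul_eq_mul_left (show 0 < m by omega) h2
        exact hne (Nat.add_left_cancel h3)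
      have := admdp_S1 (cmap s j) n (by omega) hc
      rw [← hN] at this
      simpa only [hX] using this
    -- assembling : the average regret against `pol` is at least `m d √(n/3) / 2`
    have hsumPL : ∑ σ : Fin T' → Bool, (∑ t ∈ Finset.range T,
        L σ t ⟨t % m, Nat.mod_lt _ (by omega)⟩ (pol σ ⟨t % m, Nat.mod_lt _ (by omega)⟩))
        ≤ (m:ℝ)*d*(N*n - N*Real.sqrt ((n:ℝ)/3))/2 := by
      rw [Finset.sum_congr rfl (fun σ _ => stepB σ)]
      rw [Finset.sum_comm]
      have hinner : ∀ s ∈ Finset.range m,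
          (∑ σ : Fin T' → Bool, ∑ j ∈ Finset.range d, ((n:ℝ) - |X s j σ|)/2)
          ≤ (d:ℝ)*(N*n - N*Real.sqrt ((n:ℝ)/3))/2 := by
        intro s hsmem
        have hinner2 : ∀ j ∈ Finset.range d,
            (∑ σ : Fin T' → Bool, ((n:ℝ) - |X s j σ|)/2)
            ≤ (N*n - N*Real.sqrt ((n:ℝ)/3))/2 := by
          intro j hjmem
          have hC := stepC s hsmem j hjmem
          rw [← Finset.sum_div, Finset.sum_sub_distrib, Finset.sum_const,
            Finset.card_univ, nsmul_eq_mul, ← hN]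
          have : N * (n:ℝ) - ∑ σ : Fin T' → Bool, |X s j σ|
              ≤ N*n - N*Real.sqrt ((n:ℝ)/3) := by linarith
          linarith
        calc (∑ σ : Fin T' → Bool, ∑ j ∈ Finset.range d, ((n:ℝ) - |X s j σ|)/2)
            = ∑ j ∈ Finset.range d, ∑ σ : Fin T' → Bool, ((n:ℝ) - |X s j σ|)/2 :=
              Finset.sum_comm
          _ ≤ ∑ _j ∈ Finset.range d, (N*n - N*Real.sqrt ((n:ℝ)/3))/2 :=
              Finset.sum_le_sum hinner2
          _ = (d:ℝ)*(N*n - N*Real.sqrt ((n:ℝ)/3))/2 := by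
              rw [Finset.sum_const, Finset.card_range, nsmul_eq_mul]
              ring
      calc (∑ s ∈ Finset.range m, ∑ σ : Fin T' → Bool,
            ∑ j ∈ Finset.range d, ((n:ℝ) - |X s j σ|)/2)
          ≤ ∑ _s ∈ Finset.range m, (d:ℝ)*(N*n - N*Real.sqrt ((n:ℝ)/3))/2 :=
            Finset.sum_le_sum hinner
        _ = (m:ℝ)*d*(N*n - N*Real.sqrt ((n:ℝ)/3))/2 := by
            rw [Finset.sum_const, Finset.card_range, nsmul_eq_mul]
            ring
    -- pigeonhole : some `σ` has regret against `pol σ` at least the average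
    have hpigeon : ∃ σ : Fin T' → Bool,
        (m:ℝ)*d*Real.sqrt ((n:ℝ)/3)/2
          ≤ (∑ t ∈ Finset.range T, ∑ a : Fin K,
              alg (L σ) t a * L σ t ⟨t % m, Nat.mod_lt _ (by omega)⟩ a)
            - (∑ t ∈ Finset.range T,
                L σ t ⟨t % m, Nat.mod_lt _ (by omega)⟩
                  (pol σ ⟨t % m, Nat.mod_lt _ (by omega)⟩)) := by
      have havg : ∑ _σ : Fin T' → Bool, (m:ℝ)*d*Real.sqrt ((n:ℝ)/3)/2
          ≤ ∑ σ : Fin T' → Bool, ((∑ t ∈ Finset.range T, ∑ a : Fin K,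
              alg (L σ) t a * L σ t ⟨t % m, Nat.mod_lt _ (by omega)⟩ a)
            - (∑ t ∈ Finset.range T,
                L σ t ⟨t % m, Nat.mod_lt _ (by omega)⟩
                  (pol σ ⟨t % m, Nat.mod_lt _ (by omega)⟩))) := by
        rw [Finset.sum_sub_distrib, stepA, Finset.sum_const, Finset.card_univ,
          nsmul_eq_mul, ← hN]
        have hT'cast : (T' : ℝ) = (m:ℝ)*((d:ℝ)*(n:ℝ)) := by
          rw [hT'def]
          push_cast
          ring
        rw [hT'cast]
        have := hsumPL
        nlinarith [hsumPL, hNpos]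
      obtain ⟨σ, _, hσ⟩ := Finset.exists_le_of_sum_le Finset.univ_nonempty havg
      exact ⟨σ, hσ⟩
    obtain ⟨σ, hσ⟩ := hpigeon
    refine ⟨L σ, ?_, ?_⟩
    · intro t s a
      simp only [hL]
      split_ifs <;> norm_num
    · -- the infimum is at most the loss of the comparison policy
      have hInf : (⨅ π : Fin m → Fin K, ∑ t ∈ Finset.range T,
            L σ t ⟨t % m, Nat.mod_lt _ (by omega)⟩ (π ⟨t % m, Nat.mod_lt _ (by omega)⟩))
          ≤ ∑ t ∈ Finset.range T,
              L σ t ⟨t % m, Nat.mod_lt _ (by omega)⟩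
                (pol σ ⟨t % m, Nat.mod_lt _ (by omega)⟩) :=
        ciInf_le (Set.finite_range _).bddBelow (pol σ)
      -- the numeric estimate
      have hnum : (1/10) * Real.sqrt ((m:ℝ) * (T:ℝ) * Real.log (K:ℝ))
          ≤ (m:ℝ)*d*Real.sqrt ((n:ℝ)/3)/2 := by
        have hTcast : (T:ℝ) ≤ 2*(m:ℝ)*(d:ℝ)*(n:ℝ) := by
          have : (T:ℝ) < 2*((m:ℝ)*((d:ℝ)*(n:ℝ))) := by exact_mod_cast hTlt
          linarith
        have hlog2 : Real.log 2 ≤ 0.7 := by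
          have := Real.log_two_lt_d9
          linarith
        have hlogK : Real.log (K:ℝ) ≤ 1.4*(d:ℝ) := by
          have hKle : (K:ℝ) ≤ (2:ℝ)^(d+1) := by
            exact_mod_cast hKlt.le
          have h1 : Real.log (K:ℝ) ≤ Real.log ((2:ℝ)^(d+1)) :=
            Real.log_le_log (by positivity) hKle
          rw [Real.log_pow] at h1
          have h2 : ((d:ℝ)+1) ≤ 2*(d:ℝ) := by
            have : (1:ℝ) ≤ (d:ℝ) := by exact_mod_cast hd1
            linarith
          have h3 : ((d+1 : ℕ):ℝ) * Real.log 2 ≤ 2*(d:ℝ)*0.7 := by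
            push_cast
            have hl2 : 0 ≤ Real.log 2 := Real.log_nonneg (by norm_num)
            nlinarith
          linarith
        have hlogK0 : 0 ≤ Real.log (K:ℝ) := Real.log_nonneg (by exact_mod_cast hK)
        have key : (m:ℝ) * (T:ℝ) * Real.log (K:ℝ) ≤ (5*(m:ℝ)*(d:ℝ))^2 * ((n:ℝ)/3) := by
          have h1 : (T:ℝ) * Real.log (K:ℝ) ≤ (2*(m:ℝ)*(d:ℝ)*(n:ℝ)) * (1.4*(d:ℝ)) :=
            mul_le_mul hTcast hlogK hlogK0 (by positivity)
          calc (m:ℝ) * (T:ℝ) * Real.log (K:ℝ)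
              = (m:ℝ) * ((T:ℝ) * Real.log (K:ℝ)) := by ring
            _ ≤ (m:ℝ) * ((2*(m:ℝ)*(d:ℝ)*(n:ℝ)) * (1.4*(d:ℝ))) :=
                mul_le_mul_of_nonneg_left h1 (by positivity)
            _ = 2.8 * ((m:ℝ)^2*(d:ℝ)^2*(n:ℝ)) := by ring
            _ ≤ (25/3) * ((m:ℝ)^2*(d:ℝ)^2*(n:ℝ)) := by
                have : (0:ℝ) ≤ (m:ℝ)^2*(d:ℝ)^2*(n:ℝ) := by positivity
                linarith
            _ = (5*(m:ℝ)*(d:ℝ))^2 * ((n:ℝ)/3) := by ring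
        have hmono := Real.sqrt_le_sqrt key
        have heq : Real.sqrt ((5*(m:ℝ)*(d:ℝ))^2 * ((n:ℝ)/3))
            = 5*(m:ℝ)*(d:ℝ) * Real.sqrt ((n:ℝ)/3) := by
          rw [Real.sqrt_mul (sq_nonneg _), Real.sqrt_sq (by positivity)]
        rw [heq] at hmono
        linarith
      linarith [hσ, hInf, hnum]
end
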